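/- arXiv:math/0311298 — 2 statements merged into one kernel-verified Lean document; each statement's English description precedes it below -/
import Mathlib

section
/- Let N ≥ 1 and n ≥ 0 be integers. Let R = ℤ[x_1, …, x_N] be the multivariate polynomial ring over ℤ, let Ω = Ω^1_{R/ℤ} be its module of Kähler differentials over ℤ, and let α = Σ_{i=1}^N x_i^n dx_i ∈ Ω. Then the complex 0 → R → Ω → ⋀²_R Ω → ⋯ → ⋀^N_R Ω → 0, whose differentials are left exterior multiplication by α, is exact at every spot except the last: (i) for f ∈ R, f·α = 0 implies f = 0, and (ii) for every p with 1 ≤ p ≤ N−1 and every ω ∈ ⋀^p_R Ω with α ∧ ω = 0, there exists β ∈ ⋀^{p−1}_R Ω with ω = α ∧ β. -/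
/-!
The coefficients `a i = X i ^ n` of `α` in the basis `dX i` form a regular sequence, and the
complex is the Koszul complex of `a`. Let `α_k` be the part of `α` in the first `k` basis vectors
`e_0, …, e_{k-1}` and `W_k^p` the span of their `p`-fold products; exactness of `α_k ∧ -` on `W_k`
below degree `k` is proved by induction on `k`. Every element of `W_{k+1}^{p+1}` is `y + e_k ∧ z`
with `y ∈ W_k^{p+1}`, `z ∈ W_k^p`, and
`α_{k+1} ∧ (y + e_k ∧ z) = α_k ∧ y + e_k ∧ (a_k y - α_k ∧ z)`;
contracting with `e_k^*` shows that both summands vanish if the sum does. So `y = α_k ∧ γ`, then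
`z - a_k γ` is a cycle of lower degree, so equals `α_k ∧ δ`, and
`y + e_k ∧ z = α_{k+1} ∧ (γ - e_k ∧ δ)`. The case the induction does not cover, `y` of top degree
`k`, uses that `W_k^k = R ∙ ω` is free of rank one, that `α_k ∧ W_k^{k-1} = (a_0, …, a_{k-1}) • ω`,
and that `a_k` is regular modulo this ideal.
-/

open MvPolynomial ExteriorAlgebra
open scoped nonZeroDivisors

theorem Submodule.sup_pow_succ_le {R A : Type*} [CommSemiring R] [Semiring A] [Algebra R A]
    (L P : Submodule R A) (hPL : P * L ≤ L * P) (hL : L * L = ⊥) (p : ℕ) :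
    (L ⊔ P) ^ (p + 1) ≤ P ^ (p + 1) ⊔ L * P ^ p := by
  induction p with
  | zero => simp [sup_comm]
  | succ p ih =>
    rw [pow_succ' _ (p + 1)]
    refine (mul_le_mul_right ih _).trans ?_
    rw [sup_mul, mul_sup, mul_sup]
    refine sup_le (sup_le le_sup_right ?_) (sup_le ?_ ?_)
    · rw [← mul_assoc, hL, Submodule.bot_mul]; exact bot_le
    · rw [← pow_succ']; exact le_sup_left
    · calc P * (L * P ^ p) ≤ L * P * P ^ p := by rw [← mul_assoc]; exact mul_le_mul_left hPL _
        _ ≤ _ := by rw [mul_assoc, ← pow_succ']; exact le_sup_right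

theorem Submodule.smul_mem_ideal_smul_span_singleton_iff {R M : Type*} [CommRing R]
    [AddCommGroup M] [Module R M] {ω : M} (hω : ∀ c : R, c • ω = 0 → c = 0) {I : Ideal R}
    {c : R} : c • ω ∈ I • (R ∙ ω) ↔ c ∈ I := by
  refine ⟨fun h => ?_, fun h => Submodule.smul_mem_smul h (Submodule.mem_span_singleton_self ω)⟩
  obtain ⟨c', hc', h'⟩ := Submodule.mem_smul_span_singleton.1 h
  have hcc' : c' = c := sub_eq_zero.1 (hω _ (by rw [sub_smul, h', sub_self]))
  rwa [← hcc']

theorem RingTheory.Sequence.isWeaklyRegular_ofFn_iff {R : Type*} [CommRing R] {N : ℕ}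
    (a : Fin N → R) : IsWeaklyRegular R (List.ofFn a) ↔
      ∀ i c, a i * c ∈ Ideal.span (a '' Set.Iio i) → c ∈ Ideal.span (a '' Set.Iio i) := by
  have hI (i : Fin N) : (Ideal.ofList ((List.ofFn a).take i) • ⊤ : Submodule R R) =
      Ideal.span (a '' Set.Iio i) := by
    rw [Ideal.smul_eq_mul, Ideal.mul_top, Ideal.ofList]
    congr 1
    ext r
    simp only [List.mem_take_iff_getElem, List.getElem_ofFn, List.length_ofFn, Set.mem_image,
      Set.mem_Iio]
    constructor
    · rintro ⟨j, hj, rfl⟩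
      exact ⟨⟨j, by omega⟩, Fin.lt_def.2 (by rw [Fin.val_mk]; omega), rfl⟩
    · rintro ⟨j, hj, rfl⟩
      exact ⟨j, by rw [Fin.lt_def] at hj; omega, rfl⟩
  simp only [isWeaklyRegular_iff, List.length_ofFn, List.getElem_ofFn]
  refine (Fin.forall_iff (p := fun i : Fin N => IsSMulRegular
    (R ⧸ (Ideal.ofList ((List.ofFn a).take i) • ⊤ : Submodule R R)) (a i))).symm.trans
    (forall_congr' fun i => ?_)
  rw [hI, isSMulRegular_quotient_iff_mem_of_smul_mem]
  rfl

theorem MvPolynomial.mem_ideal_span_X_pow_image_of_X_pow_mul_mem {σ R : Type*} [CommSemiring R]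
    {n : ℕ} {s : Set σ} {i : σ} (hi : i ∉ s) {c : MvPolynomial σ R}
    (h : X i ^ n * c ∈ Ideal.span ((fun j => X j ^ n) '' s)) :
    c ∈ Ideal.span ((fun j => X j ^ n) '' s) := by
  classical
  have himg : (fun j => (X j : MvPolynomial σ R) ^ n) '' s =
      (fun m => monomial m (1 : R)) '' ((fun j => Finsupp.single j n) '' s) := by
    rw [Set.image_image]
    exact Set.image_congr fun j _ => X_pow_eq_monomial
  rw [himg, mem_ideal_span_monomial_image] at h ⊢
  intro m hm
  have hm' : Finsupp.single i n + m ∈ (X i ^ n * c).support := by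
    rw [X_pow_eq_monomial, mem_support_iff, coeff_monomial_mul, one_mul]
    exact mem_support_iff.1 hm
  obtain ⟨_, ⟨j, hj, rfl⟩, hle⟩ := h _ hm'
  refine ⟨_, ⟨j, hj, rfl⟩, ?_⟩
  have hji : i ≠ j := fun hij => hi (hij ▸ hj)
  rw [Finsupp.single_le_iff] at hle ⊢
  simpa [Finsupp.single_apply, hji] using hle

namespace Module.Basis

variable {R M : Type*} [CommRing R] [AddCommGroup M] [Module R M]

lemma eq_zero_of_smul_eq_zero {ι : Type*} (b : Basis ι R M) {α : M} {j : ι}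
    (hj : b.repr α j ∈ R⁰) {r : R} (h : r • α = 0) : r = 0 := by
  have hr : r * b.repr α j = 0 := by simpa using congrArg (fun m => b.repr m j) h
  exact (mul_right_mem_nonZeroDivisors_eq_zero_iff hj).1 hr

lemma exists_eq_add_smul_of_mem_flag_succ {N : ℕ} (b : Basis (Fin N) R M) {i : Fin N} {α : M}
    (hα : α ∈ b.flag i.succ) :
    ∃ α₀ ∈ b.flag i.castSucc, α = α₀ + b.repr α i • b i ∧
      ∀ j, j.castSucc < i.castSucc → b.repr α₀ j = b.repr α j := by
  rw [b.flag_succ] at hα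
  obtain ⟨_, hc, α₀, hα₀, rfl⟩ := Submodule.mem_sup.1 hα
  obtain ⟨c, rfl⟩ := Submodule.mem_span_singleton.1 hc
  have hα₀i : b.repr α₀ i = 0 := b.flag_le_ker_coord le_rfl hα₀
  refine ⟨α₀, hα₀, by simp [hα₀i, add_comm], fun j hj => ?_⟩
  have hij : i ≠ j := (Fin.castSucc_lt_castSucc_iff.1 hj).ne'
  simp [hij]

end Module.Basis

namespace ExteriorAlgebra

open CliffordAlgebra (contractLeft contractLeft_ι_mul)

variable {R M : Type*} [CommRing R] [AddCommGroup M] [Module R M]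

lemma ι_mul_ι_eq_ι_mul_ι_neg (u v : M) : ι R u * ι R v = ι R v * ι R (-u) := by
  rw [map_neg, mul_neg, eq_neg_iff_add_eq_zero, ι_add_mul_swap]

lemma ι_add_smul_mul_add_ι_mul (u v : M) (r : R) (y z : ExteriorAlgebra R M) :
    ι R (u + r • v) * (y + ι R v * z) = ι R u * y + ι R v * (r • y - ι R u * z) := by
  have hvv : ι R v * (ι R v * z) = 0 := by rw [← mul_assoc, ι_sq_zero, zero_mul]
  have huv : ι R u * (ι R v * z) = -(ι R v * (ι R u * z)) := by
    rw [← mul_assoc, ι_mul_ι_eq_ι_mul_ι_neg, mul_assoc, map_neg, neg_mul, mul_neg]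
  rw [map_add, map_smul, add_mul, mul_add, mul_add, huv, smul_mul_assoc, smul_mul_assoc, hvv,
    smul_zero, mul_sub, mul_smul_comm]
  abel

lemma ι_add_smul_mul_sub_ι_mul (u v : M) (r : R) (γ δ : ExteriorAlgebra R M) :
    ι R (u + r • v) * (γ - ι R v * δ) = ι R u * γ + ι R v * (r • γ + ι R u * δ) := by
  rw [sub_eq_add_neg, ← mul_neg, ι_add_smul_mul_add_ι_mul, mul_neg, sub_neg_eq_add]

lemma map_ι_mul_map_ι_le (P Q : Submodule R M) :
    P.map (ι R) * Q.map (ι R) ≤ Q.map (ι R) * P.map (ι R) := by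
  refine Submodule.mul_le.2 ?_
  rintro _ ⟨u, hu, rfl⟩ _ ⟨v, hv, rfl⟩
  rw [ι_mul_ι_eq_ι_mul_ι_neg]
  exact Submodule.mul_mem_mul (Submodule.mem_map_of_mem hv) (Submodule.mem_map_of_mem (neg_mem hu))

lemma ι_mul_mem_pow_succ {P : Submodule R M} {m : M} (hm : m ∈ P) {p : ℕ}
    {x : ExteriorAlgebra R M} (hx : x ∈ P.map (ι R) ^ p) : ι R m * x ∈ P.map (ι R) ^ (p + 1) := by
  rw [pow_succ']
  exact Submodule.mul_mem_mul (Submodule.mem_map_of_mem hm) hx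

lemma exists_eq_add_ι_mul_of_mem_pow_succ {m : M} {P : Submodule R M} {p : ℕ}
    {x : ExteriorAlgebra R M} (hx : x ∈ (R ∙ m ⊔ P).map (ι R) ^ (p + 1)) :
    ∃ y ∈ P.map (ι R) ^ (p + 1), ∃ z ∈ P.map (ι R) ^ p, x = y + ι R m * z := by
  have hL : (R ∙ m).map (ι R) = R ∙ ι R m := by
    rw [Submodule.map_span, Set.image_singleton]
  have hLL : (R ∙ ι R m) * (R ∙ ι R m) = ⊥ := by
    rw [Submodule.span_mul_span, Set.singleton_mul_singleton, ι_sq_zero,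
      Submodule.span_zero_singleton]
  rw [Submodule.map_sup, hL] at hx
  obtain ⟨y, hy, w, hw, rfl⟩ := Submodule.mem_sup.1 <|
    Submodule.sup_pow_succ_le _ _ (hL ▸ map_ι_mul_map_ι_le P _) hLL p hx
  obtain ⟨z, hz, rfl⟩ := Submodule.mem_span_singleton_mul.1 hw
  exact ⟨y, hy, z, hz, rfl⟩

lemma contractLeft_eq_zero_of_mem_pow {d : Module.Dual R M} {P : Submodule R M}
    (hP : P ≤ LinearMap.ker d) {p : ℕ} {x : ExteriorAlgebra R M} (hx : x ∈ P.map (ι R) ^ p) :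
    contractLeft d x = 0 := by
  induction hx using Submodule.pow_induction_on_left' with
  | algebraMap r => exact CliffordAlgebra.contractLeft_algebraMap _ _ _
  | add x y _ _ _ hx hy => rw [map_add, hx, hy, add_zero]
  | mem_mul m hm _ x _ hx =>
    obtain ⟨u, hu, rfl⟩ := hm
    rw [contractLeft_ι_mul, hx, hP hu, zero_smul, mul_zero, sub_zero]

lemma contractLeft_ι_mul_of_mem_pow {d : Module.Dual R M} {P : Submodule R M}
    (hP : P ≤ LinearMap.ker d) (m : M) {p : ℕ} {x : ExteriorAlgebra R M}
    (hx : x ∈ P.map (ι R) ^ p) : contractLeft d (ι R m * x) = d m • x := by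
  rw [contractLeft_ι_mul, contractLeft_eq_zero_of_mem_pow hP hx, mul_zero, sub_zero]

lemma contractLeft_mem_pow (d : Module.Dual R M) {P : Submodule R M} {p : ℕ}
    {x : ExteriorAlgebra R M} (hx : x ∈ P.map (ι R) ^ (p + 1)) :
    contractLeft d x ∈ P.map (ι R) ^ p := by
  induction p generalizing x with
  | zero =>
    obtain ⟨u, -, rfl⟩ := (pow_one (P.map (ι R))) ▸ hx
    rw [CliffordAlgebra.contractLeft_ι, pow_zero]
    exact Submodule.algebraMap_mem _
  | succ p ih =>
    rw [pow_succ'] at hx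
    induction hx using Submodule.mul_induction_on' with
    | mem_mul_mem m hm y hy =>
      obtain ⟨u, hu, rfl⟩ := hm
      rw [contractLeft_ι_mul]
      exact sub_mem (Submodule.smul_mem _ _ hy) (ι_mul_mem_pow_succ hu (ih hy))
    | add y _ z _ hy hz => rw [map_add]; exact add_mem hy hz

lemma eq_zero_of_add_ι_mul_eq_zero {d : Module.Dual R M} {P : Submodule R M}
    (hP : P ≤ LinearMap.ker d) {m : M} (hm : d m = 1) {p q : ℕ} {y z : ExteriorAlgebra R M}
    (hy : y ∈ P.map (ι R) ^ p) (hz : z ∈ P.map (ι R) ^ q) (h : y + ι R m * z = 0) :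
    y = 0 ∧ z = 0 := by
  have hz0 : z = 0 := by
    simpa [contractLeft_eq_zero_of_mem_pow hP hy, contractLeft_ι_mul_of_mem_pow hP m hz, hm]
      using congrArg (contractLeft d) h
  exact ⟨by simpa [hz0] using h, hz0⟩

lemma ι_add_smul_mul_add_ι_mul_eq_zero_iff {d : Module.Dual R M} {P : Submodule R M}
    (hP : P ≤ LinearMap.ker d) {u v : M} (hu : u ∈ P) (hv : d v = 1) (r : R) {p : ℕ}
    {y z : ExteriorAlgebra R M} (hy : y ∈ P.map (ι R) ^ (p + 1)) (hz : z ∈ P.map (ι R) ^ p) :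
    ι R (u + r • v) * (y + ι R v * z) = 0 ↔ ι R u * y = 0 ∧ r • y = ι R u * z := by
  rw [ι_add_smul_mul_add_ι_mul, ← sub_eq_zero (a := r • y)]
  refine ⟨eq_zero_of_add_ι_mul_eq_zero hP hv (ι_mul_mem_pow_succ hu hy)
    (sub_mem (Submodule.smul_mem _ _ hy) (ι_mul_mem_pow_succ hu hz)), ?_⟩
  rintro ⟨h₁, h₂⟩
  rw [h₁, h₂, mul_zero, add_zero]

lemma smul_eq_ι_mul_contractLeft {m : M} {x : ExteriorAlgebra R M} (h : ι R m * x = 0)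
    (d : Module.Dual R M) : d m • x = ι R m * contractLeft d x := by
  rw [← sub_eq_zero, ← contractLeft_ι_mul, h, map_zero]

lemma eq_zero_of_ι_mul_eq_zero_of_mem_one {I : Type*} (b : Module.Basis I R M) {α : M} {j : I}
    (hj : b.repr α j ∈ R⁰) {x : ExteriorAlgebra R M} (hx : x ∈ (1 : Submodule R (ExteriorAlgebra R M)))
    (h : ι R α * x = 0) : x = 0 := by
  obtain ⟨r, rfl⟩ := Submodule.mem_one.1 hx
  rw [← Algebra.commutes, ← Algebra.smul_def, ← map_smul, ι_eq_zero_iff] at h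
  rw [b.eq_zero_of_smul_eq_zero hj h, map_zero]

section Flag

variable {N : ℕ} (b : Module.Basis (Fin N) R M)

lemma flag_map_ι_pow_mono {k l : Fin (N + 1)} (h : k ≤ l) (p : ℕ) :
    (b.flag k).map (ι R) ^ p ≤ (b.flag l).map (ι R) ^ p :=
  pow_le_pow_left' (Submodule.map_mono (b.flag_mono h)) p

lemma flag_map_ι_pow_eq_bot (k : Fin (N + 1)) {p : ℕ} (hp : (k : ℕ) < p) :
    (b.flag k).map (ι R) ^ p = ⊥ := by
  induction k using Fin.induction generalizing p with
  | zero => rw [b.flag_zero, Submodule.map_bot, Submodule.bot_pow (by omega)]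
  | succ i ih =>
    obtain ⟨p, rfl⟩ : ∃ q, p = q + 1 := ⟨p - 1, by omega⟩
    rw [Fin.val_succ] at hp
    refine eq_bot_iff.2 fun x hx => ?_
    rw [b.flag_succ] at hx
    obtain ⟨y, hy, z, hz, rfl⟩ := exists_eq_add_ι_mul_of_mem_pow_succ hx
    rw [ih (by rw [Fin.val_castSucc]; omega), Submodule.mem_bot] at hy hz
    simp [hy, hz]

lemma exists_flag_map_ι_pow_eq_span_singleton (k : Fin (N + 1)) :
    ∃ ω : ExteriorAlgebra R M,
      (b.flag k).map (ι R) ^ (k : ℕ) = R ∙ ω ∧ ∀ c : R, c • ω = 0 → c = 0 := by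
  induction k using Fin.induction with
  | zero =>
    refine ⟨1, by rw [Fin.val_zero, pow_zero, Submodule.one_eq_span], fun c hc => ?_⟩
    rwa [Algebra.smul_def, mul_one, algebraMap_eq_zero_iff] at hc
  | succ i ih =>
    obtain ⟨ω, hω, hω_inj⟩ := ih
    rw [Fin.val_castSucc] at hω
    have hωmem : ω ∈ (b.flag i.castSucc).map (ι R) ^ (i : ℕ) :=
      hω ▸ Submodule.mem_span_singleton_self ω
    refine ⟨ι R (b i) * ω, le_antisymm ?_ ?_, fun c hc => hω_inj c ?_⟩
    · intro x hx
      rw [b.flag_succ, Fin.val_succ] at hx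
      obtain ⟨y, hy, z, hz, rfl⟩ := exists_eq_add_ι_mul_of_mem_pow_succ hx
      rw [flag_map_ι_pow_eq_bot b _ (by simp), Submodule.mem_bot] at hy
      rw [hω] at hz
      obtain ⟨c, rfl⟩ := Submodule.mem_span_singleton.1 hz
      rw [hy, zero_add, mul_smul_comm]
      exact Submodule.smul_mem _ _ (Submodule.mem_span_singleton_self _)
    · rw [Submodule.span_singleton_le_iff_mem, Fin.val_succ]
      exact ι_mul_mem_pow_succ (b.self_mem_flag Fin.castSucc_lt_succ)
        (flag_map_ι_pow_mono b (Fin.castSucc_le_succ i) _ hωmem)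
    · simpa [contractLeft_ι_mul_of_mem_pow (b.flag_le_ker_coord le_rfl) _ hωmem] using
        congrArg (contractLeft (b.coord i)) hc

lemma map_mulLeft_ι_flag_eq_ideal_smul {k : Fin (N + 1)} {p : ℕ} (hk : (k : ℕ) = p + 1)
    {α : M} (hα : α ∈ b.flag k) {ω : ExteriorAlgebra R M}
    (hω : (b.flag k).map (ι R) ^ (p + 1) = R ∙ ω) :
    ((b.flag k).map (ι R) ^ p).map (LinearMap.mulLeft R (ι R α)) =
      Ideal.span (b.repr α '' {j | j.castSucc < k}) • (R ∙ ω) := by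
  have hωmem : ω ∈ (b.flag k).map (ι R) ^ (p + 1) := hω ▸ Submodule.mem_span_singleton_self ω
  have hαω : ι R α * ω = 0 := by
    have := ι_mul_mem_pow_succ hα hωmem
    rwa [flag_map_ι_pow_eq_bot b k (by omega), Submodule.mem_bot] at this
  apply le_antisymm
  · rintro _ ⟨z, hz, rfl⟩
    have hsum : ι R α * z = ∑ j, b.repr α j • (ι R (b j) * z) := by
      conv_lhs => rw [← b.sum_repr α]
      simp only [map_sum, map_smul, Finset.sum_mul, smul_mul_assoc]
    rw [LinearMap.mulLeft_apply, hsum]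
    refine Submodule.sum_mem _ fun j _ => ?_
    by_cases hj : j.castSucc < k
    · exact Submodule.smul_mem_smul (Ideal.subset_span ⟨j, hj, rfl⟩)
        (hω ▸ ι_mul_mem_pow_succ (b.self_mem_flag hj) hz)
    · rw [← b.coord_apply, b.flag_le_ker_coord (not_lt.1 hj) hα, zero_smul]
      exact zero_mem _
  · rw [Submodule.span_smul_span, Submodule.span_le]
    rintro _ ⟨_, ⟨j, -, rfl⟩, _, rfl, rfl⟩
    exact ⟨_, contractLeft_mem_pow _ hωmem, (smul_eq_ι_mul_contractLeft hαω (b.coord j)).symm⟩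

lemma exists_eq_ι_mul_of_smul_eq_ι_mul {k : Fin (N + 1)} {p : ℕ} (hk : (k : ℕ) = p + 1)
    {α : M} (hα : α ∈ b.flag k) {r : R}
    (hr : ∀ c, r * c ∈ Ideal.span (b.repr α '' {j | j.castSucc < k}) →
      c ∈ Ideal.span (b.repr α '' {j | j.castSucc < k}))
    {y z : ExteriorAlgebra R M} (hy : y ∈ (b.flag k).map (ι R) ^ (p + 1))
    (hz : z ∈ (b.flag k).map (ι R) ^ p) (hyz : r • y = ι R α * z) :
    ∃ γ ∈ (b.flag k).map (ι R) ^ p, y = ι R α * γ := by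
  obtain ⟨ω, hω, hω_inj⟩ := exists_flag_map_ι_pow_eq_span_singleton b k
  rw [hk] at hω
  have himage := map_mulLeft_ι_flag_eq_ideal_smul b hk hα hω
  rw [hω] at hy
  obtain ⟨c, rfl⟩ := Submodule.mem_span_singleton.1 hy
  have hrc : (r * c) • ω ∈ ((b.flag k).map (ι R) ^ p).map (LinearMap.mulLeft R (ι R α)) := by
    rw [mul_smul, hyz]
    exact ⟨z, hz, rfl⟩
  rw [himage, Submodule.smul_mem_ideal_smul_span_singleton_iff hω_inj] at hrc
  obtain ⟨γ, hγ, hγc⟩ : c • ω ∈ ((b.flag k).map (ι R) ^ p).map (LinearMap.mulLeft R (ι R α)) := by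
    rw [himage, Submodule.smul_mem_ideal_smul_span_singleton_iff hω_inj]
    exact hr c hrc
  exact ⟨γ, hγ, hγc.symm⟩

theorem exists_eq_ι_mul_of_ι_mul_eq_zero {a : Fin N → R}
    (ha : RingTheory.Sequence.IsWeaklyRegular R (List.ofFn a))
    (k : Fin (N + 1)) {α : M} (hα : α ∈ b.flag k)
    (hαa : ∀ j, j.castSucc < k → b.repr α j = a j) {p : ℕ} (hp : p + 1 < (k : ℕ))
    {x : ExteriorAlgebra R M} (hx : x ∈ (b.flag k).map (ι R) ^ (p + 1))
    (h : ι R α * x = 0) : ∃ β ∈ (b.flag k).map (ι R) ^ p, x = ι R α * β := by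
  rw [RingTheory.Sequence.isWeaklyRegular_ofFn_iff] at ha
  have ha₀ : ∀ j, IsMin j → a j ∈ R⁰ := fun j hj =>
    mem_nonZeroDivisors_iff_right.2 fun c hc => by
      simpa [hj.Iio_eq] using ha j c (by simp [mul_comm, hc])
  induction k using Fin.induction generalizing α p x with
  | zero => simp at hp
  | succ i ih =>
    simp only [Fin.val_castSucc] at ih
    rw [Fin.val_succ] at hp
    obtain ⟨α₀, hα₀, hαα₀, hα₀α⟩ := b.exists_eq_add_smul_of_mem_flag_succ hα
    have hα₀a j (hj : j.castSucc < i.castSucc) : b.repr α₀ j = a j :=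
      (hα₀α j hj).trans (hαa j (hj.trans Fin.castSucc_lt_succ))
    rw [hαa i Fin.castSucc_lt_succ] at hαα₀
    subst hαα₀
    rw [b.flag_succ] at hx
    obtain ⟨y, hy, z, hz, rfl⟩ := exists_eq_add_ι_mul_of_mem_pow_succ hx
    obtain ⟨hy0, hyz⟩ := (ι_add_smul_mul_add_ι_mul_eq_zero_iff (b.flag_le_ker_coord le_rfl) hα₀
      (by simp) _ hy hz).1 h
    obtain ⟨γ, hγ, rfl⟩ : ∃ γ ∈ (b.flag i.castSucc).map (ι R) ^ p, y = ι R α₀ * γ := by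
      rcases (by omega : p + 1 < i ∨ p + 1 = i) with hpi | hpi
      · exact ih hα₀ hα₀a hpi hy hy0
      · refine exists_eq_ι_mul_of_smul_eq_ι_mul b (by rw [Fin.val_castSucc, hpi]) hα₀ ?_ hy hz hyz
        rw [show {j : Fin N | j.castSucc < i.castSucc} = Set.Iio i by ext; simp,
          Set.image_congr (s := Set.Iio i) fun j hj => hα₀a j (Fin.castSucc_lt_castSucc_iff.2 hj)]
        exact ha i
    have hη : ι R α₀ * (z - a i • γ) = 0 := by
      rw [mul_sub, mul_smul_comm, ← hyz, sub_self]
    obtain ⟨δ, hδ, hzδ⟩ : ∃ δ, ι R (b i) * δ ∈ (b.flag i.succ).map (ι R) ^ p ∧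
        z - a i • γ = ι R α₀ * δ := by
      cases p with
      | zero =>
        refine ⟨0, by simp, ?_⟩
        let j₀ : Fin N := ⟨0, by omega⟩
        rw [mul_zero]
        refine eq_zero_of_ι_mul_eq_zero_of_mem_one b (j := j₀) ?_ ?_ hη
        · rw [hα₀a j₀ (Fin.castSucc_lt_castSucc_iff.2 (Fin.lt_def.2 (by rw [Fin.val_mk]; omega)))]
          exact ha₀ j₀ fun k _ => Fin.le_def.2 k.val.zero_le
        · simpa only [pow_zero] using sub_mem hz (Submodule.smul_mem _ (a i) hγ)
      | succ q =>
        obtain ⟨δ, hδ, hzδ⟩ := ih hα₀ hα₀a (by omega) (sub_mem hz (Submodule.smul_mem _ _ hγ)) hη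
        exact ⟨δ, ι_mul_mem_pow_succ (b.self_mem_flag Fin.castSucc_lt_succ)
          (flag_map_ι_pow_mono b (Fin.castSucc_le_succ i) _ hδ), hzδ⟩
    refine ⟨γ - ι R (b i) * δ, sub_mem (flag_map_ι_pow_mono b (Fin.castSucc_le_succ i) _ hγ) hδ, ?_⟩
    rw [ι_add_smul_mul_sub_ι_mul, ← hzδ, add_sub_cancel]

end Flag

end ExteriorAlgebra

/-- For `R = ℤ[x₁,…,x_N]` (`N ≥ 1`, `n ≥ 0`),
`Ω = Ω¹_{R/ℤ}` and `α = ∑ᵢ xᵢⁿ dxᵢ ∈ Ω`, the Koszul-type complex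
`0 → R → Ω → ⋀² Ω → ⋯ → ⋀^N Ω → 0` whose differentials are left exterior
multiplication by `α` is exact at every spot except the last:
(i) `f • α = 0` implies `f = 0`, and (ii) for `1 ≤ p ≤ N - 1` and
`ω ∈ ⋀^p Ω` with `α ∧ ω = 0` there is `β ∈ ⋀^(p-1) Ω` with `ω = α ∧ β`. -/
theorem stmt_0 (N n : ℕ) (hN : 1 ≤ N)
    (α : Ω[MvPolynomial (Fin N) ℤ⁄ℤ])
    (hα : α = ∑ i : Fin N,
      (X i : MvPolynomial (Fin N) ℤ) ^ n •
        (KaehlerDifferential.D ℤ (MvPolynomial (Fin N) ℤ)) (X i)) :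
    (∀ f : MvPolynomial (Fin N) ℤ, f • α = 0 → f = 0) ∧
    (∀ p : ℕ, 1 ≤ p → p ≤ N - 1 →
      ∀ ω : ⋀[MvPolynomial (Fin N) ℤ]^p (Ω[MvPolynomial (Fin N) ℤ⁄ℤ]),
        ExteriorAlgebra.ι (MvPolynomial (Fin N) ℤ) α * (ω :
            ExteriorAlgebra (MvPolynomial (Fin N) ℤ) (Ω[MvPolynomial (Fin N) ℤ⁄ℤ])) = 0 →
        ∃ β ∈ ⋀[MvPolynomial (Fin N) ℤ]^(p - 1) (Ω[MvPolynomial (Fin N) ℤ⁄ℤ]),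
          (ω : ExteriorAlgebra (MvPolynomial (Fin N) ℤ) (Ω[MvPolynomial (Fin N) ℤ⁄ℤ])) =
            ExteriorAlgebra.ι (MvPolynomial (Fin N) ℤ) α * β) := by
  set b := KaehlerDifferential.mvPolynomialBasis ℤ (Fin N)
  have hrepr : ∀ j, b.repr α j = X j ^ n := fun j => by
    simp [b, hα, KaehlerDifferential.mvPolynomialBasis_repr_D_X, Finsupp.single_apply]
  have hforms : ∀ p, (b.flag (Fin.last N)).map (ι _) ^ p =
      ⋀[MvPolynomial (Fin N) ℤ]^p (Ω[MvPolynomial (Fin N) ℤ⁄ℤ]) := fun p => by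
    rw [Module.Basis.flag_last, Submodule.map_top]
  refine ⟨fun f hf => b.eq_zero_of_smul_eq_zero (j := ⟨0, hN⟩) ?_ hf, ?_⟩
  · rw [hrepr]
    exact mem_nonZeroDivisors_of_ne_zero (pow_ne_zero _ (X_ne_zero _))
  · intro p hp1 hpN ω hω
    obtain ⟨q, rfl⟩ : ∃ q, p = q + 1 := ⟨p - 1, by omega⟩
    obtain ⟨β, hβ, hωβ⟩ := exists_eq_ι_mul_of_ι_mul_eq_zero b
      ((RingTheory.Sequence.isWeaklyRegular_ofFn_iff _).2
        fun i _ => mem_ideal_span_X_pow_image_of_X_pow_mul_mem Set.self_notMem_Iio) (Fin.last N)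
      (by simp) (fun j _ => hrepr j) (p := q) (by rw [Fin.val_last]; omega)
      (by rw [hforms]; exact ω.2) hω
    exact ⟨β, by rwa [Nat.add_sub_cancel, ← hforms], hωβ⟩
end

section
/- Let N ≥ 1 and n ≥ 0 be integers. In the module of Kähler differentials Ω^1_{R/ℤ} of R = ℤ[x_1, …, x_N] over ℤ, the following identity holds: Σ_{i=1}^N x_i^n dx_i = Σ_{j=1}^N (−1)^{j−1} h_{n+1−j} · d e_j, where e_j is the j-th elementary symmetric polynomial in x_1, …, x_N, h_m is the complete homogeneous symmetric polynomial of degree m in x_1, …, x_N (the sum of all monomials of total degree m), h_0 = 1, and h_m = 0 for m < 0. -/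
/-!
Comparing coefficients of `dxᵢ` (the `dxᵢ` form a basis of `Ω¹`), and using
`∂e_{j+1}/∂xᵢ = e_j(x without xᵢ)`, the identity becomes
`∑_{t ⊆ [N] ∖ {i}} (-1)^|t| h_{n-|t|} ∏_{a ∈ t} x_a = xᵢⁿ`.
The coefficient of a monomial `x^e` of degree `n` on the left is `∑ (-1)^|t|` over the subsets
`t` of `supp e ∖ {i}`, which vanishes unless `supp e ⊆ {i}`, i.e. unless `x^e = xᵢⁿ`.
-/

open MvPolynomial Finset

theorem Finsupp.card_support_le_degree {σ : Type*} (e : σ →₀ ℕ) : #e.support ≤ e.degree := by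
  simpa [Finsupp.degree_apply] using Finset.card_nsmul_le_sum e.support e 1
    fun a ha => Nat.one_le_iff_ne_zero.mpr (e.mem_support_iff.mp ha)

theorem Multiset.degree_toFinsupp {σ : Type*} [DecidableEq σ] (s : Multiset σ) :
    (Multiset.toFinsupp s).degree = Multiset.card s :=
  Multiset.toFinsupp_sum_eq s

theorem Finset.toFinsupp_val_le_iff {σ : Type*} [DecidableEq σ] {t : Finset σ} {e : σ →₀ ℕ} :
    Multiset.toFinsupp t.val ≤ e ↔ t ⊆ e.support := by
  rw [← Finsupp.orderIsoMultiset.le_iff_le, Finsupp.coe_orderIsoMultiset,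
    Multiset.toFinsupp_toMultiset, Multiset.le_iff_subset t.nodup]
  simp [Multiset.subset_iff, Finset.subset_iff]

theorem Finsupp.degree_eq_and_disjoint_univ_erase_iff {σ : Type*} [DecidableEq σ] [Fintype σ]
    (i : σ) (n : ℕ) (e : σ →₀ ℕ) :
    e.degree = n ∧ Disjoint (univ.erase i) e.support ↔ Finsupp.single i n = e := by
  constructor
  · rintro ⟨rfl, hdisj⟩
    have hsupp : e.support ⊆ {i} := fun a ha => by
      by_contra hai
      exact disjoint_left.mp hdisj (mem_erase.mpr ⟨by simpa using hai, mem_univ a⟩) ha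
    have he : e = Finsupp.single i (e i) := Finsupp.eq_single_iff.mpr ⟨hsupp, rfl⟩
    rw [he, Finsupp.degree_single]
  · rintro rfl
    refine ⟨Finsupp.degree_single i n, disjoint_of_subset_right Finsupp.support_single_subset ?_⟩
    exact disjoint_singleton_right.mpr (notMem_erase i univ)

namespace MvPolynomial

variable {σ R : Type*} [DecidableEq σ]

section CommSemiring

variable [CommSemiring R]

theorem multiset_prod_X_eq_monomial (s : Multiset σ) :
    (s.map (X : σ → MvPolynomial σ R)).prod = monomial (Multiset.toFinsupp s) 1 := by
  rw [Finset.prod_multiset_map_count, monomial_eq, C_1, one_mul]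
  rfl

theorem coeff_hsymm [Fintype σ] (n : ℕ) (e : σ →₀ ℕ) :
    coeff e (hsymm σ R n) = if e.degree = n then 1 else 0 := by
  simp only [hsymm, multiset_prod_X_eq_monomial, coeff_sum, coeff_monomial]
  split_ifs with he
  · let s₀ : Sym σ n := ⟨Finsupp.toMultiset e, by rw [Finsupp.card_toMultiset, ← he]; rfl⟩
    have toFinsupp_eq_iff (s : Sym σ n) : Multiset.toFinsupp s.1 = e ↔ s = s₀ := by
      rw [Multiset.toFinsupp_eq_iff]
      exact ⟨fun h => Subtype.ext h, fun h => by rw [h]⟩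
    simp only [toFinsupp_eq_iff, Fintype.sum_ite_eq']
  · refine Fintype.sum_eq_zero _ fun s => if_neg fun hs => he ?_
    rw [← hs, Multiset.degree_toFinsupp, s.2]

theorem coeff_prod_X_mul_hsymm [Fintype σ] (t : Finset σ) (m : ℕ) (e : σ →₀ ℕ) :
    coeff e ((∏ a ∈ t, X a) * hsymm σ R m) =
      if t ⊆ e.support ∧ e.degree = #t + m then 1 else 0 := by
  rw [Finset.prod_eq_multiset_prod, multiset_prod_X_eq_monomial, coeff_monomial_mul', one_mul]
  by_cases ht : t ⊆ e.support
  · have hle := toFinsupp_val_le_iff.mpr ht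
    have hdeg : (e - Multiset.toFinsupp t.val).degree + #t = e.degree := by
      rw [← card_val, ← Multiset.degree_toFinsupp, ← map_add, tsub_add_cancel_of_le hle]
    simp only [hle, ht, true_and, if_true, coeff_hsymm]
    congr 1
    rw [eq_iff_iff]
    omega
  · simp [toFinsupp_val_le_iff, ht]

theorem pderiv_prod_X_of_notMem {i : σ} {s : Finset σ} (hi : i ∉ s) :
    pderiv i (∏ a ∈ s, X a : MvPolynomial σ R) = 0 := by
  induction s using Finset.induction_on with
  | empty => simp
  | insert a s ha ih =>
    rw [mem_insert, not_or] at hi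
    rw [prod_insert ha, pderiv_mul, pderiv_X_of_ne (Ne.symm hi.1), ih hi.2, mul_zero, zero_mul,
      add_zero]

theorem pderiv_prod_X_of_mem {i : σ} {s : Finset σ} (hi : i ∈ s) :
    pderiv i (∏ a ∈ s, X a : MvPolynomial σ R) = ∏ a ∈ s.erase i, X a := by
  rw [← insert_erase hi, prod_insert (notMem_erase i s), pderiv_mul, pderiv_X_self,
    pderiv_prod_X_of_notMem (notMem_erase i s), erase_insert (notMem_erase i s), mul_zero,
    one_mul, add_zero]

theorem pderiv_esymm_succ [Fintype σ] (i : σ) (j : ℕ) :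
    pderiv i (esymm σ R (j + 1)) = ∑ t ∈ (univ.erase i).powersetCard j, ∏ a ∈ t, X a := by
  rw [esymm, map_sum, ← sum_filter_add_sum_filter_not _ (i ∈ ·),
    sum_eq_zero fun s hs => pderiv_prod_X_of_notMem (mem_filter.mp hs).2, add_zero]
  have notMem_of_mem {t : Finset σ} (ht : t ∈ (univ.erase i).powersetCard j) : i ∉ t :=
    fun h => notMem_erase i univ ((mem_powersetCard.mp ht).1 h)
  refine sum_nbij' (·.erase i) (insert i ·) (fun s hs => ?_) (fun t ht => ?_) (fun s hs => ?_)
    (fun t ht => ?_) (fun s hs => pderiv_prod_X_of_mem (mem_filter.mp hs).2)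
  · simp_all [mem_powersetCard, card_erase_of_mem, erase_subset_erase]
  · simp_all [mem_powersetCard, card_insert_of_notMem (notMem_of_mem ht)]
  · simp_all
  · simp [notMem_of_mem ht]

end CommSemiring

section ExtendedHsymm

variable [CommRing R] [Fintype σ] {h : ℤ → MvPolynomial σ R}

theorem coeff_prod_X_mul_sub_card (h_nat : ∀ m : ℕ, h m = hsymm σ R m)
    (h_neg : ∀ m : ℤ, m < 0 → h m = 0) (t : Finset σ) (n : ℕ) (e : σ →₀ ℕ) :
    coeff e ((∏ a ∈ t, X a) * h (n - #t)) =
      if t ⊆ e.support ∧ e.degree = n then 1 else 0 := by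
  by_cases htn : #t ≤ n
  · rw [← Nat.cast_sub htn, h_nat, coeff_prod_X_mul_hsymm, Nat.add_sub_cancel' htn]
  · rw [h_neg _ (by omega), mul_zero, coeff_zero, if_neg]
    rintro ⟨hsub, rfl⟩
    exact htn ((card_le_card hsub).trans e.card_support_le_degree)

theorem coeff_sum_powerset_mul_prod_X (h_nat : ∀ m : ℕ, h m = hsymm σ R m)
    (h_neg : ∀ m : ℤ, m < 0 → h m = 0) (s : Finset σ) (n : ℕ) (e : σ →₀ ℕ) :
    coeff e (∑ t ∈ s.powerset, (-1) ^ #t * h (n - #t) * ∏ a ∈ t, X a) =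
      if e.degree = n ∧ Disjoint s e.support then 1 else 0 := by
  have hterm (t : Finset σ) : coeff e ((-1) ^ #t * h (n - #t) * ∏ a ∈ t, X a) =
      if t ⊆ e.support ∧ e.degree = n then (-1) ^ #t else 0 := by
    rw [show (-1 : MvPolynomial σ R) ^ #t = C ((-1) ^ #t) by simp, mul_assoc, coeff_C_mul,
      mul_comm (h _), coeff_prod_X_mul_sub_card h_nat h_neg, mul_ite, mul_one, mul_zero]
  have hfilter : s.powerset.filter (· ⊆ e.support) = (s ∩ e.support).powerset := by
    ext t
    rw [mem_filter, mem_powerset, mem_powerset, subset_inter_iff]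
  have alternating : ∑ t ∈ (s ∩ e.support).powerset, (-1 : R) ^ #t =
      if s ∩ e.support = ∅ then 1 else 0 := by
    exact_mod_cast congrArg (Int.cast : ℤ → R) sum_powerset_neg_one_pow_card
  simp only [coeff_sum, hterm, disjoint_iff_inter_eq_empty]
  by_cases hdeg : e.degree = n
  · simp only [hdeg, and_true, true_and, ← sum_filter, hfilter, alternating]
  · simp [hdeg]

theorem sum_powerset_erase_mul_prod_X (h_nat : ∀ m : ℕ, h m = hsymm σ R m)
    (h_neg : ∀ m : ℤ, m < 0 → h m = 0) (i : σ) (n : ℕ) :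
    ∑ t ∈ (univ.erase i).powerset, (-1) ^ #t * h (n - #t) * ∏ a ∈ t, X a = X i ^ n := by
  ext e
  simp only [coeff_sum_powerset_mul_prod_X h_nat h_neg, coeff_X_pow,
    Finsupp.degree_eq_and_disjoint_univ_erase_iff]

theorem sum_neg_one_pow_mul_pderiv_esymm (h_nat : ∀ m : ℕ, h m = hsymm σ R m)
    (h_neg : ∀ m : ℤ, m < 0 → h m = 0) (i : σ) (n : ℕ) :
    ∑ j ∈ range (Fintype.card σ), (-1) ^ j * h (n - j) * pderiv i (esymm σ R (j + 1)) =
      X i ^ n := by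
  have hcard : #(univ.erase i) + 1 = Fintype.card σ := by
    rw [card_erase_of_mem (mem_univ i), card_univ,
      Nat.sub_add_cancel (Fintype.card_pos_iff.mpr ⟨i⟩)]
  rw [← sum_powerset_erase_mul_prod_X h_nat h_neg i n, sum_powerset, hcard]
  simp_rw [pderiv_esymm_succ, mul_sum]
  exact sum_congr rfl fun j _ => sum_congr rfl fun t ht => by rw [(mem_powersetCard.mp ht).2]

end ExtendedHsymm

end MvPolynomial

theorem stmt_4_general (N n : ℕ)
    (h : ℤ → MvPolynomial (Fin N) ℤ)
    (h_nat : ∀ m : ℕ, h m = hsymm (Fin N) ℤ m)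
    (h_neg : ∀ m : ℤ, m < 0 → h m = 0) :
    ∑ i : Fin N,
        (X i : MvPolynomial (Fin N) ℤ) ^ n •
          (KaehlerDifferential.D ℤ (MvPolynomial (Fin N) ℤ)) (X i) =
      ∑ j : Fin N,
        ((-1 : MvPolynomial (Fin N) ℤ) ^ (j : ℕ) * h ((n : ℤ) - (j : ℕ))) •
          (KaehlerDifferential.D ℤ (MvPolynomial (Fin N) ℤ))
            (esymm (Fin N) ℤ ((j : ℕ) + 1)) := by
  refine (KaehlerDifferential.mvPolynomialBasis ℤ (Fin N)).repr.injective (Finsupp.ext fun i => ?_)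
  have coeff_dxᵢ := sum_neg_one_pow_mul_pderiv_esymm h_nat h_neg i n
  rw [Fintype.card_fin] at coeff_dxᵢ
  simp only [map_sum, map_smul, Finsupp.coe_finsetSum, Finset.sum_apply, Finsupp.smul_apply,
    KaehlerDifferential.mvPolynomialBasis_repr_apply, smul_eq_mul]
  rw [Fin.sum_univ_eq_sum_range (fun j => (-1) ^ j * h (n - j) * pderiv i (esymm _ ℤ (j + 1))),
    coeff_dxᵢ]
  simp [pderiv_X, Pi.single_apply]

/-- In `Ω¹_{R/ℤ}` for `R = ℤ[x₁,…,x_N]` (`N ≥ 1`, `n ≥ 0`):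
`∑ᵢ xᵢⁿ dxᵢ = ∑_{j=1}^{N} (−1)^{j−1} h_{n+1−j} · d e_j`, where `e_j` is the
`j`-th elementary symmetric polynomial and `h_m` is the complete homogeneous
symmetric polynomial of degree `m` (`h₀ = 1`, `h_m = 0` for `m < 0`).
Here `h : ℤ → R` encodes this convention. -/
theorem stmt_4 (N n : ℕ) (hN : 1 ≤ N)
    (h : ℤ → MvPolynomial (Fin N) ℤ)
    (h_nat : ∀ m : ℕ, h m = hsymm (Fin N) ℤ m)
    (h_neg : ∀ m : ℤ, m < 0 → h m = 0) :
    ∑ i : Fin N,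
        (X i : MvPolynomial (Fin N) ℤ) ^ n •
          (KaehlerDifferential.D ℤ (MvPolynomial (Fin N) ℤ)) (X i) =
      ∑ j : Fin N,
        ((-1 : MvPolynomial (Fin N) ℤ) ^ (j : ℕ) * h ((n : ℤ) - (j : ℕ))) •
          (KaehlerDifferential.D ℤ (MvPolynomial (Fin N) ℤ))
            (esymm (Fin N) ℤ ((j : ℕ) + 1)) :=
  stmt_4_general N n h h_nat h_neg
end
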